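/- Let v : 𝕋³ → ℝ³ be smooth, and suppose u, w : 𝕋³ → ℝ³ are smooth vector fields satisfying Δu^k = v^k − ⨍_{𝕋³} v^k and Δw^k = u^k for each k. Define the matrix field R^{ij} = −(1/2) ∂_i ∂_j ∂_k w^k − (1/2) ∂_k u^k δ_{ij} + ∂_i u^j + ∂_j u^i (summation over k). Then R is symmetric, R is traceless, and for each i, ∂_j R^{ij} = v^i − ⨍_{𝕋³} v^i (summation over j). -/

import Mathlib

/-- Partial derivative in the `i`-th coordinate direction of a function on `ℝ³`. -/
noncomputable def pd3 (f : (Fin 3 → ℝ) → ℝ) (i : Fin 3) (x : Fin 3 → ℝ) : ℝ :=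
  fderiv ℝ f x (Pi.single i 1)

/-- The mean of a `(2πℤ)³`-periodic function over a fundamental domain. -/
noncomputable def avg3 (f : (Fin 3 → ℝ) → ℝ) : ℝ :=
  (∫ x in Set.Icc (0 : Fin 3 → ℝ) fun _ => 2 * Real.pi, f x) / (2 * Real.pi) ^ 3



private lemma comp3_contDiff {f : (Fin 3 → ℝ) → Fin 3 → ℝ} (hf : ContDiff ℝ (⊤ : ℕ∞) f)
    (k : Fin 3) : ContDiff ℝ (⊤ : ℕ∞) fun y => f y k :=
  (ContinuousLinearMap.proj k : (Fin 3 → ℝ) →L[ℝ] ℝ).contDiff.comp hf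

private lemma pd3_contDiff {f : (Fin 3 → ℝ) → ℝ} (hf : ContDiff ℝ (⊤ : ℕ∞) f) (i : Fin 3) :
    ContDiff ℝ (⊤ : ℕ∞) (pd3 f i) := by
  have h1 : ContDiff ℝ (⊤ : ℕ∞) (fderiv ℝ f) := hf.fderiv_right (by simp)
  exact h1.clm_apply contDiff_const

private lemma pd3_swap {f : (Fin 3 → ℝ) → ℝ} (hf : ContDiff ℝ (⊤ : ℕ∞) f) (i j : Fin 3)
    (x : Fin 3 → ℝ) : pd3 (pd3 f i) j x = pd3 (pd3 f j) i x := by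
  have hd : ContDiff ℝ (⊤ : ℕ∞) (fderiv ℝ f) := hf.fderiv_right (by simp)
  have hdd : DifferentiableAt ℝ (fderiv ℝ f) x := (hd.differentiable (by simp)) x
  have key : ∀ a b : Fin 3 → ℝ,
      fderiv ℝ (fderiv ℝ f) x a b = fderiv ℝ (fderiv ℝ f) x b a := fun a b =>
    second_derivative_symmetric (fun y => ((hf.differentiable (by simp)) y).hasFDerivAt)
      hdd.hasFDerivAt a b
  have e : ∀ k l : Fin 3,
      pd3 (pd3 f k) l x = fderiv ℝ (fderiv ℝ f) x (Pi.single l 1) (Pi.single k 1) := by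
    intro k l
    show fderiv ℝ (fun y => fderiv ℝ f y (Pi.single k 1)) x (Pi.single l 1) = _
    rw [fderiv_clm_apply hdd (differentiableAt_const _)]
    simp
  rw [e, e, key]

private lemma pd3_dAt {f : (Fin 3 → ℝ) → ℝ} (hf : ContDiff ℝ (⊤ : ℕ∞) f) (x : Fin 3 → ℝ) :
    DifferentiableAt ℝ f x := (hf.differentiable (by simp)) x

private lemma pd3_sum {f : Fin 3 → (Fin 3 → ℝ) → ℝ}
    (hf : ∀ k, ContDiff ℝ (⊤ : ℕ∞) (f k)) (i : Fin 3) (x : Fin 3 → ℝ) :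
    pd3 (fun y => ∑ k, f k y) i x = ∑ k, pd3 (f k) i x := by
  show fderiv ℝ (fun y => ∑ k, f k y) x (Pi.single i 1) = _
  rw [fderiv_fun_sum (fun k _ => pd3_dAt (hf k) x)]
  simp [pd3]

private lemma pd3_swap3 {g : (Fin 3 → ℝ) → ℝ} (hg : ContDiff ℝ (⊤ : ℕ∞) g) (i m : Fin 3)
    (x : Fin 3 → ℝ) : pd3 (pd3 (pd3 g i) m) m x = pd3 (pd3 (pd3 g m) m) i x := by
  have h1 : pd3 (pd3 g i) m = pd3 (pd3 g m) i := funext fun y => pd3_swap hg i m y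
  rw [h1]
  exact pd3_swap (pd3_contDiff hg m) i m x

private lemma lap_pd3 {g : (Fin 3 → ℝ) → ℝ} (hg : ContDiff ℝ (⊤ : ℕ∞) g) (i : Fin 3)
    (x : Fin 3 → ℝ) :
    (∑ m, pd3 (pd3 (pd3 g i) m) m x) = pd3 (fun y => ∑ m, pd3 (pd3 g m) m y) i x := by
  rw [Finset.sum_congr rfl fun m _ => pd3_swap3 hg i m x]
  exact (pd3_sum (fun m => pd3_contDiff (pd3_contDiff hg m) m) i x).symm

private lemma pd3_comb {p q c d : (Fin 3 → ℝ) → ℝ} (e : ℝ)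
    (hp : ContDiff ℝ (⊤ : ℕ∞) p) (hq : ContDiff ℝ (⊤ : ℕ∞) q)
    (hc : ContDiff ℝ (⊤ : ℕ∞) c) (hd : ContDiff ℝ (⊤ : ℕ∞) d) (j : Fin 3) (x : Fin 3 → ℝ) :
    pd3 (fun y => -(1 / 2) * p y - 1 / 2 * q y * e + c y + d y) j x
      = -(1 / 2) * pd3 p j x - 1 / 2 * pd3 q j x * e + pd3 c j x + pd3 d j x := by
  have H : HasFDerivAt (fun y => -(1 / 2) * p y - 1 / 2 * q y * e + c y + d y)
      (((((-(1:ℝ)/2) • fderiv ℝ p x) - e • ((1/2 : ℝ) • fderiv ℝ q x)) + fderiv ℝ c x)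
        + fderiv ℝ d x) x := by
    have hp' := (pd3_dAt hp x).hasFDerivAt
    have hq' := (pd3_dAt hq x).hasFDerivAt
    have hc' := (pd3_dAt hc x).hasFDerivAt
    have hd' := (pd3_dAt hd x).hasFDerivAt
    have h1 := ((hp'.const_mul (-(1:ℝ)/2)).sub ((hq'.const_mul ((1:ℝ)/2)).mul_const e)).add hc'
    have h2 := h1.add hd'
    refine h2.congr_of_eventuallyEq (Filter.Eventually.of_forall fun y => ?_)
    simp only [Pi.add_apply, Pi.sub_apply]
    ring
  show fderiv ℝ _ x (Pi.single j 1) = _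
  rw [H.fderiv]
  simp [pd3]
  ring

/-- **Fourier-multiplier inverse divergence (differential form).**  If `Δu = v − ⨍v` and
`Δw = u` componentwise on `𝕋³`, then
`R^{ij} = −½∂_i∂_j∂_k w^k − ½ ∂_k u^k δ_{ij} + ∂_i u^j + ∂_j u^i` is symmetric, traceless,
and satisfies `∂_j R^{ij} = v^i − ⨍ v^i`. -/
theorem statement6
    (v u w : (Fin 3 → ℝ) → Fin 3 → ℝ)
    (hv : ContDiff ℝ (⊤ : ℕ∞) v) (hu : ContDiff ℝ (⊤ : ℕ∞) u) (hw : ContDiff ℝ (⊤ : ℕ∞) w)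
    (hvper : ∀ (x : Fin 3 → ℝ) (z : Fin 3 → ℤ),
      v (x + fun i => 2 * Real.pi * (z i : ℝ)) = v x)
    (huper : ∀ (x : Fin 3 → ℝ) (z : Fin 3 → ℤ),
      u (x + fun i => 2 * Real.pi * (z i : ℝ)) = u x)
    (hwper : ∀ (x : Fin 3 → ℝ) (z : Fin 3 → ℤ),
      w (x + fun i => 2 * Real.pi * (z i : ℝ)) = w x)
    (hΔu : ∀ x k, (∑ m, pd3 (pd3 (fun y => u y k) m) m x) = v x k - avg3 fun y => v y k)
    (hΔw : ∀ x k, (∑ m, pd3 (pd3 (fun y => w y k) m) m x) = u x k)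
    (R : (Fin 3 → ℝ) → Matrix (Fin 3) (Fin 3) ℝ)
    (hR : ∀ x i j, R x i j
        = -(1 / 2) * pd3 (pd3 (fun y => ∑ k, pd3 (fun z => w z k) k y) i) j x
          - (1 / 2) * (∑ k, pd3 (fun y => u y k) k x) * (if i = j then 1 else 0)
          + pd3 (fun y => u y j) i x + pd3 (fun y => u y i) j x) :
    (∀ x i j, R x i j = R x j i) ∧
    (∀ x, (∑ i, R x i i) = 0) ∧
    (∀ x i, (∑ j, pd3 (fun y => R y i j) j x) = v x i - avg3 fun y => v y i) := by
  have hwc : ∀ k, ContDiff ℝ (⊤ : ℕ∞) fun y => w y k := comp3_contDiff hw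
  have huc : ∀ k, ContDiff ℝ (⊤ : ℕ∞) fun y => u y k := comp3_contDiff hu
  set F : (Fin 3 → ℝ) → ℝ := fun y => ∑ k, pd3 (fun z => w z k) k y with hFdef
  have hF : ContDiff ℝ (⊤ : ℕ∞) F := ContDiff.sum fun k _ => pd3_contDiff (hwc k) k
  have hGc : ContDiff ℝ (⊤ : ℕ∞) fun y => ∑ k, pd3 (fun z => u z k) k y :=
    ContDiff.sum fun k _ => pd3_contDiff (huc k) k
  have hlapF : ∀ x, (∑ m, pd3 (pd3 F m) m x) = ∑ k, pd3 (fun z => u z k) k x := by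
    intro x
    have h1 : ∀ m, pd3 F m = fun y => ∑ k, pd3 (pd3 (fun z => w z k) k) m y := by
      intro m; funext y
      exact pd3_sum (fun k => pd3_contDiff (hwc k) k) m y
    calc (∑ m, pd3 (pd3 F m) m x)
        = ∑ m, ∑ k, pd3 (pd3 (pd3 (fun z => w z k) k) m) m x := by
          refine Finset.sum_congr rfl fun m _ => ?_
          rw [h1 m]
          exact pd3_sum (fun k => pd3_contDiff (pd3_contDiff (hwc k) k) m) m x
      _ = ∑ k, ∑ m, pd3 (pd3 (pd3 (fun z => w z k) k) m) m x := Finset.sum_comm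
      _ = ∑ k, pd3 (fun y => ∑ m, pd3 (pd3 (fun z => w z k) m) m y) k x :=
          Finset.sum_congr rfl fun k _ => lap_pd3 (hwc k) k x
      _ = ∑ k, pd3 (fun z => u z k) k x := by
          refine Finset.sum_congr rfl fun k _ => ?_
          congr 1
          funext y
          exact hΔw y k
  refine ⟨?_, ?_, ?_⟩
  · intro x i j
    rw [hR x i j, hR x j i, pd3_swap hF i j x]
    by_cases h : i = j
    · subst h; ring
    · rw [if_neg h, if_neg (Ne.symm h)]; ring
  · intro x
    have e : ∀ i : Fin 3, R x i i = -(1 / 2) * pd3 (pd3 F i) i x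
        - 1 / 2 * (∑ k, pd3 (fun z => u z k) k x) + 2 * pd3 (fun z => u z i) i x := fun i => by
      rw [hR x i i, if_pos rfl]; ring
    rw [Finset.sum_congr rfl fun i _ => e i, Finset.sum_add_distrib, Finset.sum_sub_distrib,
      ← Finset.mul_sum, ← Finset.mul_sum, ← Finset.mul_sum, hlapF x, Finset.sum_const,
      Finset.card_univ, Fintype.card_fin, nsmul_eq_mul]
    push_cast
    ring
  · intro x i
    have hRf : ∀ j, (fun y => R y i j) = fun y =>
        -(1 / 2) * pd3 (pd3 F i) j y
          - 1 / 2 * (∑ k, pd3 (fun z => u z k) k y) * (if i = j then 1 else 0)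
          + pd3 (fun z => u z j) i y + pd3 (fun z => u z i) j y :=
      fun j => funext fun y => hR y i j
    have step1 : (∑ j, pd3 (fun y => R y i j) j x) =
        ∑ j, (-(1 / 2) * pd3 (pd3 (pd3 F i) j) j x
          - 1 / 2 * pd3 (fun y => ∑ k, pd3 (fun z => u z k) k y) j x * (if i = j then 1 else 0)
          + pd3 (pd3 (fun z => u z j) i) j x + pd3 (pd3 (fun z => u z i) j) j x) := by
      refine Finset.sum_congr rfl fun j _ => ?_
      rw [hRf j]
      exact pd3_comb (if i = j then 1 else 0) (pd3_contDiff (pd3_contDiff hF i) j) hGc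
        (pd3_contDiff (huc j) i) (pd3_contDiff (huc i) j) j x
    have hS1 : (∑ j, pd3 (pd3 (pd3 F i) j) j x)
        = pd3 (fun y => ∑ k, pd3 (fun z => u z k) k y) i x := by
      rw [lap_pd3 hF i x]
      congr 1
      funext y
      exact hlapF y
    have hS3 : (∑ j, pd3 (pd3 (fun z => u z j) i) j x)
        = pd3 (fun y => ∑ k, pd3 (fun z => u z k) k y) i x := by
      rw [Finset.sum_congr rfl fun j _ => pd3_swap (huc j) i j x]
      exact (pd3_sum (fun j => pd3_contDiff (huc j) j) i x).symm
    have hS4 : (∑ j, pd3 (pd3 (fun z => u z i) j) j x) = v x i - avg3 fun y => v y i := hΔu x i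
    have t1 : (∑ j, -(1 / 2 : ℝ) * pd3 (pd3 (pd3 F i) j) j x)
        = -(1 / 2) * pd3 (fun y => ∑ k, pd3 (fun z => u z k) k y) i x := by
      rw [← Finset.mul_sum, hS1]
    have t2 : (∑ j, 1 / 2 * pd3 (fun y => ∑ k, pd3 (fun z => u z k) k y) j x
          * (if i = j then 1 else 0))
        = 1 / 2 * pd3 (fun y => ∑ k, pd3 (fun z => u z k) k y) i x := by
      simp [mul_ite]
    rw [step1, Finset.sum_add_distrib, Finset.sum_add_distrib, Finset.sum_sub_distrib,
      t1, t2, hS3, hS4]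
    ring
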